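/- Let n ≥ 0, let R = ℚ[x_1,…,x_n], let e_1,…,e_n ∈ R be the elementary symmetric polynomials, let c_k = e_k(1,2,…,n), and let I = (e_1−c_1,…,e_n−c_n) ⊂ R. For any polynomial F ∈ R, the ℚ-rank of the multiplication map m_F : R/I → R/I equals the number of permutations σ of {1,…,n} such that F(σ(1),…,σ(n)) ≠ 0. -/

import Mathlib

set_option synthInstance.maxHeartbeats 1000000

open MvPolynomial

/-- `c k` is the value of the `k`-th elementary symmetric polynomial at `(1,2,…,n)`. -/
noncomputable def cval (n k : ℕ) : ℚ :=
  eval (fun i : Fin n => ((i : ℕ) : ℚ) + 1) (esymm (Fin n) ℚ k)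

/-- The ideal `I = (e_1 - c_1, …, e_n - c_n)` of polynomials vanishing on all
permutations of `(1,…,n)`. -/
noncomputable def permIdeal (n : ℕ) : Ideal (MvPolynomial (Fin n) ℚ) :=
  Ideal.span (Set.range (fun k : Fin n =>
    esymm (Fin n) ℚ ((k : ℕ) + 1) - C (cval n ((k : ℕ) + 1))))

/-- Multiplication by (the class of) `F` on the quotient `R/I`, as a `ℚ`-linear map. -/
noncomputable def mulMap (n : ℕ) (I : Ideal (MvPolynomial (Fin n) ℚ))
    (F : MvPolynomial (Fin n) ℚ) :
    (MvPolynomial (Fin n) ℚ ⧸ I) →ₗ[ℚ] (MvPolynomial (Fin n) ℚ ⧸ I) :=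
  LinearMap.mulLeft ℚ (Ideal.Quotient.mk I F)

/-! Modulo `I` the relations `eₖ = cₖ` give `∏ᵢ (T - xᵢ) = ∏ᵢ (T - i)`, so every `xⱼ` is a root of
`∏ᵢ (T - i)`: `I` contains the grid polynomials `∏ᵢ (xⱼ - i)`, and the common zeros of `I` are
exactly the `n!` permutations of `(1,…,n)` (equal monic polynomials have equal roots). By the
combinatorial Nullstellensatz a polynomial vanishing on the grid `{1,…,n}ⁿ` is a combination of
grid polynomials; multiplying by a polynomial `u ≡ 1 mod I` that vanishes at the grid points where
some element of `I` does not shows that `I` is the whole vanishing ideal of the permutation points.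
So evaluation at these points is an isomorphism `R/I ≃ ℚ^{Sₙ}`, which turns `m_F` into the diagonal
map with entries `F(σ(1),…,σ(n))`. -/

universe u

namespace MvPolynomial

variable {σ : Type*}

theorem exists_map_eq_one_forall_eval_eq_zero {R M : Type*} [CommSemiring R] [CommMonoid M]
    (φ : MvPolynomial σ R →* M) (B : Finset (σ → R))
    (h : ∀ y ∈ B, ∃ p, φ p = 1 ∧ eval y p = 0) :
    ∃ p, φ p = 1 ∧ ∀ y ∈ B, eval y p = 0 := by
  choose p hp1 hp0 using h
  refine ⟨∏ y ∈ B.attach, p y y.2, by simp [map_prod, hp1], fun y hy => ?_⟩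
  rw [map_prod]
  exact Finset.prod_eq_zero (Finset.mem_attach B ⟨y, hy⟩) (hp0 y hy)

theorem mem_span_prod_X_sub_C_of_eval_eq_zero {R : Type*} [CommRing R] [IsDomain R] [Finite σ]
    (S : σ → Finset R) (hS : ∀ i, (S i).Nonempty) {f : MvPolynomial σ R}
    (hf : ∀ x : σ → R, (∀ i, x i ∈ S i) → eval x f = 0) :
    f ∈ Ideal.span (Set.range fun i => ∏ r ∈ S i, (X i - C r)) := by
  obtain ⟨h, -, rfl⟩ := combinatorial_nullstellensatz_exists_linearCombination S hS f hf
  have := LinearMap.mem_range_self (Finsupp.linearCombination (MvPolynomial σ R)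
    fun i => ∏ r ∈ S i, (X i - C r)) h
  rwa [Finsupp.range_linearCombination] at this

variable {k : Type*} [Field k]

theorem exists_eval_eq_one_forall_eval_eq_zero {x : σ → k} {B : Finset (σ → k)} (hx : x ∉ B) :
    ∃ p : MvPolynomial σ k, eval x p = 1 ∧ ∀ y ∈ B, eval y p = 0 := by
  refine exists_map_eq_one_forall_eval_eq_zero (eval x : MvPolynomial σ k →+* k).toMonoidHom B
    fun y hy => ?_
  obtain ⟨i, hi⟩ := Function.ne_iff.1 (ne_of_mem_of_not_mem hy hx)
  refine ⟨C (x i - y i)⁻¹ * (X i - C (y i)), ?_, by simp⟩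
  simp [inv_mul_cancel₀ (sub_ne_zero.2 hi.symm)]

theorem mem_of_prod_X_sub_C_mem_of_eval_eq_zero [Finite σ] {I : Ideal (MvPolynomial σ k)}
    (S : σ → Finset k) (hS : ∀ i, (S i).Nonempty) (hI : ∀ i, ∏ r ∈ S i, (X i - C r) ∈ I)
    {f : MvPolynomial σ k}
    (hf : ∀ x : σ → k, (∀ i, x i ∈ S i) → (∀ g ∈ I, eval x g = 0) → eval x f = 0) :
    f ∈ I := by
  classical
  have := Fintype.ofFinite σ
  obtain ⟨u, hu1, hu0⟩ := exists_map_eq_one_forall_eval_eq_zero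
    (Ideal.Quotient.mk I : MvPolynomial σ k →+* _).toMonoidHom
    ((Fintype.piFinset S).filter fun x => ∃ g ∈ I, eval x g ≠ 0) fun y hy => by
      obtain ⟨g, hgI, hgy⟩ := (Finset.mem_filter.1 hy).2
      refine ⟨1 - C (eval y g)⁻¹ * g, ?_, by simp [hgy]⟩
      simp [Ideal.Quotient.eq_zero_iff_mem.2 hgI]
  have hfu : f * u ∈ I := by
    refine (Ideal.span_le.2 ?_) (mem_span_prod_X_sub_C_of_eval_eq_zero S hS fun x hx => ?_)
    · rintro _ ⟨i, rfl⟩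
      exact hI i
    by_cases hxI : ∃ g ∈ I, eval x g ≠ 0
    · simp [hu0 x (Finset.mem_filter.2 ⟨Fintype.mem_piFinset.2 hx, hxI⟩)]
    · push Not at hxI
      simp [hf x hx hxI]
  have hu : 1 - u ∈ I := Ideal.Quotient.eq.1 (by simpa using hu1.symm)
  rw [show f = f * (1 - u) + f * u by ring]
  exact I.add_mem (I.mul_mem_left f hu) hfu

end MvPolynomial

theorem LinearMap.rank_mulLeft_algEquiv {K : Type*} {A B : Type u} [CommRing K] [Ring A] [Ring B]
    [Algebra K A] [Algebra K B] (e : A ≃ₐ[K] B) (a : A) :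
    rank (mulLeft K (e a)) = rank (mulLeft K a) := by
  have : mulLeft K (e a) = e.toLinearMap ∘ₗ mulLeft K a ∘ₗ e.symm.toLinearMap := by
    ext; simp
  rw [this, LinearMap.rank, ← LinearMap.comp_assoc,
    LinearMap.range_comp_of_range_eq_top _ (LinearEquiv.range e.symm.toLinearEquiv),
    LinearMap.range_comp]
  exact LinearEquiv.rank_map_eq e.toLinearEquiv _

theorem LinearMap.rank_mulLeft_pi {K ι : Type*} [Field K] [Fintype ι] [DecidableEq ι]
    [DecidableEq K] (w : ι → K) :
    rank (mulLeft K w) = Fintype.card {i // w i ≠ 0} := by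
  rw [← rank_diagonal]
  congr 1
  ext x i
  simp [Matrix.mulVec_diagonal]

theorem Finset.prod_X_sub_C_eq_of_esymm_eq {ι A : Type*} [CommRing A] (s : Finset ι)
    {f g : ι → A} (h : ∀ m, 0 < m → m ≤ s.card → (s.val.map f).esymm m = (s.val.map g).esymm m) :
    ∏ i ∈ s, (Polynomial.X - Polynomial.C (f i)) =
      ∏ i ∈ s, (Polynomial.X - Polynomial.C (g i)) := by
  have hf := Multiset.prod_X_sub_X_eq_sum_esymm (s.val.map f)
  have hg := Multiset.prod_X_sub_X_eq_sum_esymm (s.val.map g)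
  simp only [Multiset.map_map, Function.comp_def, Multiset.card_map, Finset.card_val,
    ← Finset.prod_eq_multiset_prod] at hf hg
  rw [hf, hg]
  refine Finset.sum_congr rfl fun m hm => ?_
  rcases m.eq_zero_or_pos with rfl | hm0
  · simp [Multiset.esymm]
  · rw [h m hm0 (Nat.lt_succ_iff.1 (Finset.mem_range.1 hm))]

def basePoint (n : ℕ) (i : Fin n) : ℚ := (i : ℕ) + 1

theorem basePoint_injective (n : ℕ) : Function.Injective (basePoint n) := by
  intro i j h
  simpa [basePoint, Fin.val_inj] using h

theorem eval_esymm_basePoint_comp (n m : ℕ) (σ : Equiv.Perm (Fin n)) :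
    eval (basePoint n ∘ σ) (esymm (Fin n) ℚ m) = cval n m := by
  rw [← eval_rename, esymm_isSymmetric]
  rfl

theorem permIdeal_le_ker_eval (n : ℕ) (σ : Equiv.Perm (Fin n)) :
    permIdeal n ≤ RingHom.ker (eval (basePoint n ∘ σ)) := by
  rw [permIdeal, Ideal.span_le]
  rintro _ ⟨k, rfl⟩
  simp [eval_esymm_basePoint_comp]

theorem prod_X_sub_C_eq_of_permIdeal_le_ker {n : ℕ} {A : Type*} [CommRing A] [Algebra ℚ A]
    (φ : MvPolynomial (Fin n) ℚ →ₐ[ℚ] A) (hφ : permIdeal n ≤ RingHom.ker φ) :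
    ∏ i, (Polynomial.X - Polynomial.C (φ (X i))) =
      ∏ i, (Polynomial.X - Polynomial.C (algebraMap ℚ A (basePoint n i))) := by
  refine Finset.prod_X_sub_C_eq_of_esymm_eq _ fun m hm0 hmn => ?_
  have hgen : esymm (Fin n) ℚ m - C (cval n m) ∈ permIdeal n := by
    rw [Finset.card_univ, Fintype.card_fin] at hmn
    obtain ⟨k, rfl⟩ := Nat.exists_eq_add_of_lt hm0
    exact Ideal.subset_span ⟨⟨k, by omega⟩, by simp⟩
  have hφm : φ (esymm (Fin n) ℚ m) = algebraMap ℚ A (cval n m) := by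
    simpa [sub_eq_zero] using hφ hgen
  calc (Finset.univ.val.map fun i => φ (X i)).esymm m = φ (esymm (Fin n) ℚ m) := by
        conv_rhs => rw [aeval_unique φ, aeval_esymm_eq_multiset_esymm]
        rfl
    _ = algebraMap ℚ A (cval n m) := hφm
    _ = _ := by
        rw [← aeval_esymm_eq_multiset_esymm (Fin n) ℚ]
        exact (aeval_algebraMap_apply A (basePoint n) (esymm (Fin n) ℚ m)).symm

theorem prod_X_sub_C_basePoint_mem_permIdeal (n : ℕ) (j : Fin n) :
    ∏ i, (X j - C (basePoint n i)) ∈ permIdeal n := by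
  have h := congrArg (Polynomial.eval (Ideal.Quotient.mk (permIdeal n) (X j)))
    (prod_X_sub_C_eq_of_permIdeal_le_ker (Ideal.Quotient.mkₐ ℚ (permIdeal n))
      (Ideal.Quotient.mkₐ_ker ℚ (permIdeal n)).ge)
  simp only [Polynomial.eval_prod, Polynomial.eval_sub, Polynomial.eval_X, Polynomial.eval_C,
    Ideal.Quotient.mkₐ_eq_mk] at h
  rw [Finset.prod_eq_zero (Finset.mem_univ j) (sub_self _)] at h
  rw [← Ideal.Quotient.eq_zero_iff_mem, map_prod]
  simpa [← Ideal.Quotient.mk_algebraMap, MvPolynomial.algebraMap_eq] using h.symm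

theorem exists_perm_of_forall_eval_permIdeal_eq_zero {n : ℕ} {x : Fin n → ℚ}
    (hx : ∀ g ∈ permIdeal n, eval x g = 0) : ∃ σ : Equiv.Perm (Fin n), x = basePoint n ∘ σ := by
  have h := prod_X_sub_C_eq_of_permIdeal_le_ker (aeval x) fun g hg => by
    simpa [RingHom.mem_ker, coe_aeval_eq_eval] using hx g hg
  simp only [aeval_X, Algebra.algebraMap_self, RingHom.id_apply] at h
  have hroots : Finset.univ.val.map x = Finset.univ.val.map (basePoint n) := by
    rw [← Polynomial.roots_multiset_prod_X_sub_C (Finset.univ.val.map x),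
      ← Polynomial.roots_multiset_prod_X_sub_C (Finset.univ.val.map (basePoint n))]
    simp only [Multiset.map_map, Function.comp_def, ← Finset.prod_eq_multiset_prod, h]
  have hmem (y : Fin n → ℚ) (i : Fin n) : y i ∈ Finset.univ.val.map y :=
    Multiset.mem_map_of_mem y (Finset.mem_univ i)
  choose p hp using fun i => Multiset.mem_map.1 (hroots ▸ hmem x i)
  have hp_surj : Function.Surjective p := fun k => by
    obtain ⟨j, -, hj⟩ := Multiset.mem_map.1 (hroots.symm ▸ hmem (basePoint n) k)
    exact ⟨j, basePoint_injective n ((hp j).2.trans hj)⟩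
  exact ⟨Equiv.ofBijective p ⟨Finite.injective_iff_surjective.2 hp_surj, hp_surj⟩,
    funext fun i => ((hp i).2).symm⟩

noncomputable def evalPerms (n : ℕ) :
    MvPolynomial (Fin n) ℚ →ₐ[ℚ] (Equiv.Perm (Fin n) → ℚ) :=
  AlgHom.pi fun σ => aeval (basePoint n ∘ σ)

theorem evalPerms_apply (n : ℕ) (f : MvPolynomial (Fin n) ℚ) (σ : Equiv.Perm (Fin n)) :
    evalPerms n f σ = eval (basePoint n ∘ σ) f :=
  rfl

theorem ker_evalPerms (n : ℕ) : RingHom.ker (evalPerms n) = permIdeal n := by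
  refine le_antisymm (fun f hf => ?_) fun f hf => ?_
  · refine mem_of_prod_X_sub_C_mem_of_eval_eq_zero (fun _ => Finset.univ.image (basePoint n))
      (fun i => ⟨_, Finset.mem_image_of_mem _ (Finset.mem_univ i)⟩) (fun j => ?_) fun x _ hx => ?_
    · rw [Finset.prod_image fun a _ b _ h => basePoint_injective n h]
      exact prod_X_sub_C_basePoint_mem_permIdeal n j
    · obtain ⟨σ, rfl⟩ := exists_perm_of_forall_eval_permIdeal_eq_zero hx
      exact congrFun (RingHom.mem_ker.1 hf) σ
  · refine RingHom.mem_ker.2 (funext fun σ => ?_)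
    rw [evalPerms_apply]
    exact RingHom.mem_ker.1 (permIdeal_le_ker_eval n σ hf)

theorem evalPerms_surjective (n : ℕ) : Function.Surjective (evalPerms n) := by
  have hsingle (σ : Equiv.Perm (Fin n)) : ∃ p, evalPerms n p = Pi.single σ 1 := by
    have hσ : basePoint n ∘ σ ∉
        (Finset.univ.erase σ).image fun τ : Equiv.Perm (Fin n) => basePoint n ∘ τ := by
      simp only [Finset.mem_image, Finset.mem_erase, not_exists, not_and]
      rintro τ ⟨hτ, -⟩ h
      exact hτ (Equiv.coe_fn_injective ((basePoint_injective n).comp_left h))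
    obtain ⟨p, hp1, hp0⟩ := exists_eval_eq_one_forall_eval_eq_zero hσ
    refine ⟨p, funext fun τ => ?_⟩
    rcases eq_or_ne τ σ with rfl | hτ
    · simpa [evalPerms_apply] using hp1
    · simpa [evalPerms_apply, hτ] using hp0 _ (Finset.mem_image_of_mem _ (by simpa using hτ))
  choose p hp using hsingle
  exact fun w => ⟨∑ σ, w σ • p σ, funext fun τ => by simp [map_sum, hp, Pi.single_apply]⟩

noncomputable def permQuotientEquiv (n : ℕ) :
    (MvPolynomial (Fin n) ℚ ⧸ permIdeal n) ≃ₐ[ℚ] (Equiv.Perm (Fin n) → ℚ) :=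
  (Ideal.quotientEquivAlgOfEq ℚ (ker_evalPerms n).symm).trans
    (Ideal.quotientKerAlgEquivOfSurjective (evalPerms_surjective n))

theorem permQuotientEquiv_mk (n : ℕ) (f : MvPolynomial (Fin n) ℚ) :
    permQuotientEquiv n (Ideal.Quotient.mk _ f) = evalPerms n f :=
  rfl

/-- For any `F ∈ R`, the `ℚ`-rank of multiplication by `F` on `R/I` equals the number of
permutations `σ` of `{1,…,n}` with `F(σ(1),…,σ(n)) ≠ 0`. -/
theorem rank_mul_eq_card_nonvanishing (n : ℕ) (F : MvPolynomial (Fin n) ℚ) :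
    LinearMap.rank (mulMap n (permIdeal n) F) =
      ((Finset.univ.filter (fun σ : Equiv.Perm (Fin n) =>
        eval (fun i : Fin n => ((σ i : ℕ) : ℚ) + 1) F ≠ 0)).card : Cardinal) := by
  classical
  rw [mulMap, ← LinearMap.rank_mulLeft_algEquiv (permQuotientEquiv n), permQuotientEquiv_mk,
    LinearMap.rank_mulLeft_pi, Fintype.card_subtype]
  rfl
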